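/- Let μ be a probability measure with compact support contained in (0, ∞), q_t(ω) := ∏_{j=1}^d (2t)/(4π²ω_j² + t²), and let (X, Y) be a random pair in ℝᵈ × ℝ with E[Y²] < ∞. For i ∈ {1,…,d}, a subset A ⊆ {1,…,d} and β ∈ ℝᵈ, define the extended-real-valued function 𝓝_{i,A}(β) := ∫₀^∞ ∫_{ℝᵈ} ∫_{ℝ} | E[ (Y − E[Y | X_A]) e^{−2πi⟨ω, β∘X⟩} e^{−2πiζX_i} ] |² (1/(2π²ζ²)) dζ · t q_t(ω) dω μ(dt) ∈ [0, ∞]. Then for every fixed i and A, the map β ↦ 𝓝_{i,A}(β) is lower semicontinuous on ℝᵈ. -/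

import Mathlib

open MeasureTheory Real

/-- The σ-algebra generated by the coordinates `(X_j)_{j ∈ A}` of `X`. -/
def sigmaCoords {d : ℕ} {Ω : Type} [MeasurableSpace Ω]
    (X : Ω → Fin d → ℝ) (A : Set (Fin d)) : MeasurableSpace Ω :=
  MeasurableSpace.comap (fun p => fun j : A => X p (j : Fin d)) inferInstance

/-- The extended-real-valued quantity `𝓝_{i,A}(β)`:
`∫₀^∞ ∫_{ℝᵈ} ∫_ℝ |E[(Y − E[Y|X_A]) e^{−2πi⟨ω,β∘X⟩} e^{−2πiζX_i}]|² /(2π²ζ²) dζ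
  · t q_t(ω) dω μ(dt) ∈ [0, ∞]`. -/
noncomputable def Ncal {d : ℕ} {Ω : Type} [MeasureSpace Ω]
    (μ : Measure ℝ) (X : Ω → Fin d → ℝ) (Y : Ω → ℝ)
    (i : Fin d) (A : Set (Fin d)) (β : Fin d → ℝ) : ENNReal :=
  ∫⁻ t, (∫⁻ ω : Fin d → ℝ,
      (∫⁻ ζ : ℝ, ENNReal.ofReal
        (‖∫ p, (((Y p - ((volume : Measure Ω)[Y | sigmaCoords X A]) p : ℝ) : ℂ)
            * Complex.exp (-(2 * π * Complex.I) * ((∑ j, ω j * (β j * X p j) : ℝ) : ℂ))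
            * Complex.exp (-(2 * π * Complex.I) * ((ζ * X p i : ℝ) : ℂ))) ∂volume‖ ^ 2
          / (2 * π ^ 2 * ζ ^ 2)))
      * ENNReal.ofReal (t * ∏ j, (2 * t) / (4 * π ^ 2 * (ω j) ^ 2 + t ^ 2))) ∂μ

open Filter Topology
open scoped ENNReal

/-! Each layer of `𝓝_{i,A}` is a lower integral of a function that is lower semicontinuous in
`β`, so Fatou's lemma (along sequences, as the parameter space is first countable) propagates
lower semicontinuity through the three integrals. At the bottom, `β ↦ E[(Y − E[Y|X_A]) e^{…}]`
is even continuous, by dominated convergence with dominating function `|Y − E[Y|X_A]|`, which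
is integrable because `E[Y²] < ∞`. -/

theorem lowerSemicontinuous_lintegral {X α : Type*} [TopologicalSpace X]
    [FirstCountableTopology X] [MeasurableSpace α] {ν : Measure α} {f : X → α → ℝ≥0∞}
    (hf_meas : ∀ x, AEMeasurable (f x) ν) (hf : ∀ a, LowerSemicontinuous fun x => f x a) :
    LowerSemicontinuous fun x => ∫⁻ a, f x a ∂ν := by
  intro x₀ y hy
  by_contra hcon
  obtain ⟨u, hu, hle⟩ := exists_seq_forall_of_frequently (not_eventually.1 hcon)
  have h_fatou : ∀ a, f x₀ a ≤ liminf (fun n => f (u n) a) atTop := fun a =>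
    calc f x₀ a ≤ liminf (fun x => f x a) (𝓝 x₀) := (hf a).le_liminf x₀
      _ ≤ liminf (fun x => f x a) (map u atTop) := liminf_le_liminf_of_le hu
      _ = liminf (fun n => f (u n) a) atTop := (liminf_comp _ u atTop).symm
  have h_le : ∫⁻ a, f x₀ a ∂ν ≤ y :=
    calc ∫⁻ a, f x₀ a ∂ν ≤ ∫⁻ a, liminf (fun n => f (u n) a) atTop ∂ν := lintegral_mono h_fatou
      _ ≤ liminf (fun n => ∫⁻ a, f (u n) a ∂ν) atTop := lintegral_liminf_le' fun n => hf_meas (u n)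
      _ ≤ y := liminf_le_of_frequently_le' (.of_forall fun n => not_lt.1 (hle n))
  exact hy.not_ge h_le

theorem continuous_integral_mul_of_norm_le_one {Q α 𝕜 : Type*} [TopologicalSpace Q]
    [FirstCountableTopology Q] [MeasurableSpace α] [RCLike 𝕜] {ν : Measure α} {g : α → 𝕜}
    (hg : Integrable g ν) {u : Q → α → 𝕜} (hu_meas : ∀ q, AEStronglyMeasurable (u q) ν)
    (hu_norm : ∀ q p, ‖u q p‖ ≤ 1) (hu_cont : ∀ p, Continuous fun q => u q p) :
    Continuous fun q => ∫ p, g p * u q p ∂ν :=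
  continuous_of_dominated (fun q => hg.1.mul (hu_meas q))
    (fun q => .of_forall fun p => by
      simpa [norm_mul] using mul_le_of_le_one_right (norm_nonneg (g p)) (hu_norm q p))
    hg.norm (.of_forall fun p => continuous_const.mul (hu_cont p))

theorem Complex.norm_exp_neg_two_pi_I_mul_ofReal (r : ℝ) :
    ‖Complex.exp (-(2 * π * Complex.I) * r)‖ = 1 := by
  rw [Complex.norm_exp]
  simp

theorem lowerSemicontinuous_triple_lintegral_of_continuous {B : Type*} [TopologicalSpace B]
    [FirstCountableTopology B] {d : ℕ} (μ : Measure ℝ) {Φ : B → ℝ → (Fin d → ℝ) → ℂ}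
    (hΦ : Continuous fun q : B × ℝ × (Fin d → ℝ) => Φ q.1 q.2.1 q.2.2) :
    LowerSemicontinuous fun β =>
      ∫⁻ t, (∫⁻ ω : Fin d → ℝ,
          (∫⁻ ζ : ℝ, ENNReal.ofReal (‖Φ β ζ ω‖ ^ 2 / (2 * π ^ 2 * ζ ^ 2)))
        * ENNReal.ofReal (t * ∏ j, (2 * t) / (4 * π ^ 2 * (ω j) ^ 2 + t ^ 2))) ∂μ := by
  set h : B → ℝ → (Fin d → ℝ) → ℝ≥0∞ := fun β ζ ω =>
    ENNReal.ofReal (‖Φ β ζ ω‖ ^ 2 / (2 * π ^ 2 * ζ ^ 2))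
  set w : ℝ → (Fin d → ℝ) → ℝ≥0∞ := fun t ω =>
    ENNReal.ofReal (t * ∏ j, (2 * t) / (4 * π ^ 2 * (ω j) ^ 2 + t ^ 2))
  have h_meas : ∀ β, Measurable fun p : (Fin d → ℝ) × ℝ => h β p.2 p.1 := fun β => by
    have : Continuous fun p : (Fin d → ℝ) × ℝ => Φ β p.2 p.1 := by fun_prop
    fun_prop
  have h_cont : ∀ ζ ω, Continuous fun β => h β ζ ω := fun ζ ω =>
    ENNReal.continuous_ofReal.comp (by fun_prop)
  have w_meas : Measurable fun p : ℝ × (Fin d → ℝ) => w p.1 p.2 := by fun_prop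
  have G_meas : ∀ β, Measurable fun ω => ∫⁻ ζ, h β ζ ω := fun β =>
    (h_meas β).lintegral_prod_right'
  have G_lsc : ∀ ω, LowerSemicontinuous fun β => ∫⁻ ζ, h β ζ ω := fun ω =>
    lowerSemicontinuous_lintegral
      (fun β => ((h_meas β).comp (measurable_const.prodMk measurable_id)).aemeasurable)
      (fun ζ => (h_cont ζ ω).lowerSemicontinuous)
  refine lowerSemicontinuous_lintegral
    (fun β => (((G_meas β).comp measurable_snd).mul w_meas).lintegral_prod_right'.aemeasurable)
    fun t => lowerSemicontinuous_lintegral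
      (fun β => ((G_meas β).mul (w_meas.comp (measurable_const.prodMk measurable_id))).aemeasurable)
      fun ω => (ENNReal.continuous_mul_const ENNReal.ofReal_ne_top).comp_lowerSemicontinuous
        (G_lsc ω) fun _ _ hab => mul_le_mul_left hab _

theorem stmt19_general {d : ℕ}
    (μ : Measure ℝ)
    {Ω : Type} [MeasureSpace Ω] [IsProbabilityMeasure (volume : Measure Ω)]
    (X : Ω → Fin d → ℝ) (Y : Ω → ℝ) (hX : Measurable X) (hY : Measurable Y)
    (hY2 : Integrable (fun p => (Y p) ^ 2) volume)
    (i : Fin d) (A : Set (Fin d)) :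
    LowerSemicontinuous (fun β : Fin d → ℝ => Ncal μ X Y i A β) := by
  have hY_int : Integrable Y volume :=
    ((memLp_two_iff_integrable_sq hY.aestronglyMeasurable).2 hY2).integrable one_le_two
  have hres : Integrable (fun p => ((Y p - (volume[Y | sigmaCoords X A]) p : ℝ) : ℂ)) volume :=
    (hY_int.sub integrable_condExp).ofReal
  unfold Ncal
  apply lowerSemicontinuous_triple_lintegral_of_continuous μ
  simp_rw [mul_assoc _ (Complex.exp _)]
  refine continuous_integral_mul_of_norm_le_one hres (fun q => ?_) (fun q p => ?_) (fun p => ?_)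
  · fun_prop
  · simp only [norm_mul, Complex.norm_exp_neg_two_pi_I_mul_ofReal, mul_one, le_refl]
  · fun_prop

/-- for every fixed `i` and `A`, the map `β ↦ 𝓝_{i,A}(β)` is lower
semicontinuous on `ℝᵈ`. -/
theorem stmt19 {d : ℕ} (hd : 1 ≤ d)
    (μ : Measure ℝ) [IsProbabilityMeasure μ]
    (hμsupp : ∃ a b : ℝ, 0 < a ∧ a ≤ b ∧ μ (Set.Icc a b) = 1)
    {Ω : Type} [MeasureSpace Ω] [IsProbabilityMeasure (volume : Measure Ω)]
    (X : Ω → Fin d → ℝ) (Y : Ω → ℝ) (hX : Measurable X) (hY : Measurable Y)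
    (hY2 : Integrable (fun p => (Y p) ^ 2) volume)
    (i : Fin d) (A : Set (Fin d)) :
    LowerSemicontinuous (fun β : Fin d → ℝ => Ncal μ X Y i A β) :=
  stmt19_general μ X Y hX hY hY2 i A
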